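/- Let V^* be the optimal value function of a γ-discounted MDP derived from a weakly communicating average-reward MDP with optimal gain ρ* and bias h*. For any policy π, horizon T, and initial state s̃, the accumulated variance of V* along the occupancy measure satisfies Σ_{s,a} d_T^π(s,a|s̃)·V(P_{s,a}, V*) ≤ 8·sp(h*)² + 4·sp(h*)·T·ρ* + 4·sp(h*)²·T·(1-γ). -/

import Mathlib

/-!
Centre `V*` at `L = ρ*/(1-γ) - sp(h*)`: by the discounted approximation `V*` takes values in
`[L, L + 2 sp(h*)]`. For the potential `g(x) = (x - L)² - 4 sp(h*) (x - L)`, which lies in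
`[-4 sp(h*)², 0]` there, the variance `𝕍(P_{s,a}, V*)` is at most the drift `P_{s,a} g - g(s)`
plus `4 sp(h*) (ρ* + (1-γ) sp(h*))`, because `V*(s) - P_{s,a} V* ≥ -(1-γ) P_{s,a} V*` by the
Bellman equation and `r ≥ 0`. Summed against the occupancy measure the drifts telescope to at
most `4 sp(h*)²`, while the constant is paid once per time step.
-/

open Finset

section StochasticVector

variable {S : Type*} [Fintype S] {p f : S → ℝ} {c : ℝ}

lemma sum_mul_le_of_le (hp0 : ∀ s, 0 ≤ p s) (hp1 : ∑ s, p s = 1) (hf : ∀ s, f s ≤ c) :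
    ∑ s, p s * f s ≤ c :=
  calc ∑ s, p s * f s ≤ ∑ s, p s * c :=
        sum_le_sum fun s _ => mul_le_mul_of_nonneg_left (hf s) (hp0 s)
    _ = c := by rw [← sum_mul, hp1, one_mul]

lemma le_sum_mul_of_le (hp0 : ∀ s, 0 ≤ p s) (hp1 : ∑ s, p s = 1) (hf : ∀ s, c ≤ f s) :
    c ≤ ∑ s, p s * f s :=
  calc c = ∑ s, p s * c := by rw [← sum_mul, hp1, one_mul]
    _ ≤ ∑ s, p s * f s := sum_le_sum fun s _ => mul_le_mul_of_nonneg_left (hf s) (hp0 s)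

lemma sum_mul_mem_Icc (hp0 : ∀ s, 0 ≤ p s) (hp1 : ∑ s, p s = 1) {a b : ℝ}
    (hf : ∀ s, f s ∈ Set.Icc a b) : ∑ s, p s * f s ∈ Set.Icc a b :=
  ⟨le_sum_mul_of_le hp0 hp1 fun s => (hf s).1, sum_mul_le_of_le hp0 hp1 fun s => (hf s).2⟩

lemma sum_mul_add_const (hp1 : ∑ s, p s = 1) (f : S → ℝ) (c : ℝ) :
    ∑ s, p s * (f s + c) = ∑ s, p s * f s + c := by
  simp only [mul_add, sum_add_distrib, ← sum_mul, hp1, one_mul]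

end StochasticVector

def variancePotential (L B x : ℝ) : ℝ := (x - L) ^ 2 - 2 * B * (x - L)

lemma variancePotential_mem_Icc {L B x : ℝ} (hx : x ∈ Set.Icc L (L + B)) :
    variancePotential L B x ∈ Set.Icc (-B ^ 2) 0 := by
  obtain ⟨h1, h2⟩ := hx
  unfold variancePotential
  constructor <;> nlinarith [sq_nonneg (x - L - B)]

lemma variance_le_variancePotential_drift {S : Type*} [Fintype S] {p V : S → ℝ}
    (hp0 : ∀ s, 0 ≤ p s) (hp1 : ∑ s, p s = 1) {L B c v : ℝ} (hc : 0 ≤ c)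
    (hV : ∀ s, V s ∈ Set.Icc L (L + B)) (hv : v ∈ Set.Icc L (L + B))
    (hdrift : -c ≤ v - ∑ s, p s * V s) :
    ∑ s, p s * V s ^ 2 - (∑ s, p s * V s) ^ 2 ≤
      ∑ s, p s * variancePotential L B (V s) - variancePotential L B v + 2 * B * c := by
  set Q := ∑ s, p s * V s
  have hpot : ∑ s, p s * variancePotential L B (V s) =
      ∑ s, p s * V s ^ 2 - 2 * (L + B) * Q + (L ^ 2 + 2 * B * L) := by
    have expand : ∀ s, p s * variancePotential L B (V s) =
        p s * V s ^ 2 - 2 * (L + B) * (p s * V s) + (L ^ 2 + 2 * B * L) * p s := fun s => by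
      unfold variancePotential; ring
    rw [sum_congr rfl fun s _ => expand s, sum_add_distrib, sum_sub_distrib, ← mul_sum,
      ← mul_sum, hp1, mul_one]
  obtain ⟨hQL, hQB⟩ := sum_mul_mem_Icc hp0 hp1 hV
  obtain ⟨hvL, hvB⟩ := hv
  rw [hpot]
  unfold variancePotential
  -- `v ^ 2 - Q ^ 2 = (v - Q) (v + Q)` with `v - Q ≥ -c` and `v + Q - 2 L ∈ [0, 2 B]`
  nlinarith [mul_nonneg (by linarith : 0 ≤ v - Q + c)
      (by linarith : 0 ≤ 2 * B - (v - L) - (Q - L)),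
    mul_nonneg hc (by linarith : 0 ≤ (v - L) + (Q - L))]

section Occupancy

variable {S A : Type*} [Fintype S] [Fintype A] {P : S → A → S → ℝ} {π : S → A → ℝ}
  {ν : ℕ → S → A → ℝ}

variable (P π ν) in
def OccupancyRecursion : Prop :=
  ∀ t, 1 ≤ t → ∀ s a, ν (t + 1) s a = π s a * ∑ s', ∑ a', ν t s' a' * P s' a' s

lemma occupancy_succ_sum (hπ1 : ∀ s, ∑ a, π s a = 1)
    (hνrec : OccupancyRecursion P π ν)
    {t : ℕ} (ht : 1 ≤ t) (f : S → ℝ) :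
    ∑ s, ∑ a, ν t s a * ∑ s', P s a s' * f s' = ∑ s, ∑ a, ν (t + 1) s a * f s := by
  have hmarg : ∀ s, ∑ a, ν (t + 1) s a * f s =
      (∑ s', ∑ a', ν t s' a' * P s' a' s) * f s := by
    intro s
    simp only [hνrec t ht]
    rw [← sum_mul, ← sum_mul, hπ1, one_mul]
  rw [sum_congr rfl fun s _ => hmarg s]
  simp only [mul_sum, sum_mul]
  conv_rhs => rw [sum_comm]; enter [2, s']; rw [sum_comm]
  exact sum_congr rfl fun s _ => sum_congr rfl fun a _ => sum_congr rfl fun s' _ => by ring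

lemma occupancy_nonneg (hP0 : ∀ s a s', 0 ≤ P s a s') (hπ0 : ∀ s a, 0 ≤ π s a)
    (hνrec : OccupancyRecursion P π ν)
    (hν1 : ∀ s a, 0 ≤ ν 1 s a) {t : ℕ} (ht : 1 ≤ t) (s : S) (a : A) : 0 ≤ ν t s a := by
  induction t, ht using Nat.le_induction generalizing s a with
  | base => exact hν1 s a
  | succ t ht ih =>
    rw [hνrec t ht]
    exact mul_nonneg (hπ0 s a) (sum_nonneg fun s' _ => sum_nonneg fun a' _ =>
      mul_nonneg (ih s' a') (hP0 s' a' s))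

lemma occupancy_sum_eq_one (hP1 : ∀ s a, ∑ s', P s a s' = 1) (hπ1 : ∀ s, ∑ a, π s a = 1)
    (hνrec : OccupancyRecursion P π ν)
    (hν1 : ∑ s, ∑ a, ν 1 s a = 1) {t : ℕ} (ht : 1 ≤ t) : ∑ s, ∑ a, ν t s a = 1 := by
  induction t, ht using Nat.le_induction with
  | base => exact hν1
  | succ t ht ih =>
    have := occupancy_succ_sum hπ1 hνrec ht fun _ => 1
    simp only [mul_one, hP1] at this
    rw [← this, ih]

lemma sum_occupancy_mul_le_of_drift (hP0 : ∀ s a s', 0 ≤ P s a s')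
    (hP1 : ∀ s a, ∑ s', P s a s' = 1) (hπ0 : ∀ s a, 0 ≤ π s a)
    (hπ1 : ∀ s, ∑ a, π s a = 1) (hνrec : OccupancyRecursion P π ν)
    (hν0 : ∀ s a, 0 ≤ ν 1 s a) (hν1 : ∑ s, ∑ a, ν 1 s a = 1)
    {X : S → A → ℝ} {g : S → ℝ} {C D : ℝ}
    (hX : ∀ s a, X s a ≤ ∑ s', P s a s' * g s' - g s + C) (hg : ∀ s, g s ∈ Set.Icc (-D) 0)
    (T : ℕ) :
    ∑ s, ∑ a, (∑ t ∈ Icc 1 T, ν t s a) * X s a ≤ D + T * C := by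
  set Φ : ℕ → ℝ := fun t => ∑ s, ∑ a, ν t s a * g s with hΦ
  have hν : ∀ {t}, 1 ≤ t → ∀ s a, 0 ≤ ν t s a := occupancy_nonneg hP0 hπ0 hνrec hν0
  have hstep : ∀ t ∈ Icc 1 T, ∑ s, ∑ a, ν t s a * X s a ≤ Φ (t + 1) - Φ t + C := by
    intro t ht
    have ht1 : 1 ≤ t := (mem_Icc.1 ht).1
    calc ∑ s, ∑ a, ν t s a * X s a
        ≤ ∑ s, ∑ a, ν t s a * (∑ s', P s a s' * g s' - g s + C) :=
          sum_le_sum fun s _ => sum_le_sum fun a _ =>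
            mul_le_mul_of_nonneg_left (hX s a) (hν ht1 s a)
      _ = ∑ s, ∑ a, ν t s a * ∑ s', P s a s' * g s' - Φ t + C * ∑ s, ∑ a, ν t s a := by
          simp only [hΦ, mul_add, mul_sub, sum_add_distrib, sum_sub_distrib, mul_sum]
          simp only [mul_comm C]
      _ = Φ (t + 1) - Φ t + C := by
          rw [occupancy_succ_sum hπ1 hνrec ht1, occupancy_sum_eq_one hP1 hπ1 hνrec hν1 ht1,
            mul_one]
  have hΦ1 : -D ≤ Φ 1 := by
    simp only [hΦ, ← Fintype.sum_prod_type']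
    exact le_sum_mul_of_le (fun x => hν0 x.1 x.2) (by rwa [Fintype.sum_prod_type'])
      fun x => (hg x.1).1
  have hΦT : Φ (T + 1) ≤ 0 :=
    sum_nonpos fun s _ => sum_nonpos fun a _ =>
      mul_nonpos_of_nonneg_of_nonpos (hν (by omega) s a) (hg s).2
  calc ∑ s, ∑ a, (∑ t ∈ Icc 1 T, ν t s a) * X s a
      = ∑ t ∈ Icc 1 T, ∑ s, ∑ a, ν t s a * X s a := by
        simp only [sum_mul]
        conv_rhs => rw [sum_comm]; enter [2, s]; rw [sum_comm]
    _ ≤ ∑ t ∈ Icc 1 T, (Φ (t + 1) - Φ t + C) := sum_le_sum hstep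
    _ = Φ (T + 1) - Φ 1 + T * C := by
        rw [sum_add_distrib, ← Ico_add_one_right_eq_Icc, sum_Ico_sub Φ (by omega)]
        simp
    _ ≤ D + T * C := by linarith

end Occupancy

section DiscountedBellman

variable {S A : Type*} [Fintype S] [Fintype A] [Nonempty A] {P : S → A → S → ℝ}
  {r : S → A → ℝ} {γ : ℝ}

variable (P r γ) in
def bellmanOp (V : S → ℝ) (s : S) : ℝ :=
  univ.sup' univ_nonempty fun a => r s a + γ * ∑ s', P s a s' * V s'

lemma add_le_bellmanOp (V : S → ℝ) (s : S) (a : A) :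
    r s a + γ * ∑ s', P s a s' * V s' ≤ bellmanOp P r γ V s :=
  le_sup' (fun a => r s a + γ * ∑ s', P s a s' * V s') (mem_univ a)

lemma bellmanOp_le_add (hP0 : ∀ s a s', 0 ≤ P s a s') (hP1 : ∀ s a, ∑ s', P s a s' = 1)
    (hγ0 : 0 ≤ γ) {U V : S → ℝ} {c : ℝ} (hVU : ∀ s, V s ≤ U s + c) (s : S) :
    bellmanOp P r γ V s ≤ bellmanOp P r γ U s + γ * c := by
  refine sup'_le _ _ fun a _ => ?_
  have hPV : ∑ s', P s a s' * V s' ≤ ∑ s', P s a s' * U s' + c := by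
    rw [← sum_mul_add_const (hP1 s a)]
    exact sum_le_sum fun s' _ => mul_le_mul_of_nonneg_left (hVU s') (hP0 s a s')
  nlinarith [mul_le_mul_of_nonneg_left hPV hγ0,
    add_le_bellmanOp (P := P) (r := r) (γ := γ) U s a]

lemma le_add_of_bellmanOp_le [Nonempty S] (hP0 : ∀ s a s', 0 ≤ P s a s')
    (hP1 : ∀ s a, ∑ s', P s a s' = 1) (hγ0 : 0 ≤ γ) (hγ1 : γ < 1) {V U : S → ℝ}
    (hV : ∀ s, V s = bellmanOp P r γ V s) {c : ℝ}
    (hU : ∀ s, bellmanOp P r γ U s ≤ U s + (1 - γ) * c) (s : S) :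
    V s ≤ U s + c := by
  obtain ⟨s₀, hs₀⟩ := Finite.exists_max fun s => V s - U s
  have hT := bellmanOp_le_add (r := r) hP0 hP1 hγ0 (U := U) (V := V) (c := V s₀ - U s₀)
    (fun s => by linarith [hs₀ s]) s₀
  have hmax : V s₀ - U s₀ ≤ c := by nlinarith [hV s₀, hU s₀]
  linarith [hs₀ s]

lemma sub_le_of_le_bellmanOp [Nonempty S] (hP0 : ∀ s a s', 0 ≤ P s a s')
    (hP1 : ∀ s a, ∑ s', P s a s' = 1) (hγ0 : 0 ≤ γ) (hγ1 : γ < 1) {V U : S → ℝ}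
    (hV : ∀ s, V s = bellmanOp P r γ V s) {c : ℝ}
    (hU : ∀ s, U s - (1 - γ) * c ≤ bellmanOp P r γ U s) (s : S) :
    U s - c ≤ V s := by
  obtain ⟨s₀, hs₀⟩ := Finite.exists_max fun s => U s - V s
  have hT := bellmanOp_le_add (r := r) hP0 hP1 hγ0 (U := V) (V := U) (c := U s₀ - V s₀)
    (fun s => by linarith [hs₀ s]) s₀
  have hmax : U s₀ - V s₀ ≤ c := by nlinarith [hV s₀, hU s₀]
  linarith [hs₀ s]

lemma abs_sub_div_one_sub_le_of_bellman [Nonempty S] (hP0 : ∀ s a s', 0 ≤ P s a s')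
    (hP1 : ∀ s a, ∑ s', P s a s' = 1) (hγ0 : 0 ≤ γ) (hγ1 : γ < 1)
    {ρ m M : ℝ} {h : S → ℝ}
    (hh : ∀ s, h s ∈ Set.Icc m M)
    (hBellAvg : ∀ s, ρ + h s =
      univ.sup' univ_nonempty (fun a => r s a + ∑ s', P s a s' * h s'))
    {V : S → ℝ} (hV : ∀ s, V s = bellmanOp P r γ V s) (s : S) :
    |V s - ρ / (1 - γ)| ≤ M - m := by
  -- `U` is a super-solution of the discounted Bellman equation, and a sub-solution up to
  -- `(1 - γ) (M - m)`, because its backup is that of `h` damped by `(1 - γ) (P h - m)`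
  set U : S → ℝ := fun s => h s + (ρ / (1 - γ) - m) with hU
  have hγ' : 0 < 1 - γ := by linarith
  have hdiv : ρ / (1 - γ) - ρ = γ * (ρ / (1 - γ)) := by field_simp; ring
  have hTU : ∀ s a, r s a + γ * ∑ s', P s a s' * U s' =
      (r s a + ∑ s', P s a s' * h s') - (1 - γ) * (∑ s', P s a s' * h s' - m) +
        (ρ / (1 - γ) - ρ) - m := fun s a => by
    rw [hU, sum_mul_add_const (hP1 s a), hdiv]; ring
  have hup : ∀ s, bellmanOp P r γ U s ≤ U s + (1 - γ) * 0 := fun s => by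
    refine sup'_le _ _ fun a _ => ?_
    have hPh := le_sum_mul_of_le (hP0 s a) (hP1 s a) fun s' => (hh s').1
    have hle := (hBellAvg s).symm ▸
      le_sup' (fun a => r s a + ∑ s', P s a s' * h s') (mem_univ a)
    rw [hTU]
    nlinarith [mul_nonneg hγ'.le (sub_nonneg.2 hPh)]
  have hlo : ∀ s, U s - (1 - γ) * (M - m) ≤ bellmanOp P r γ U s := fun s => by
    obtain ⟨a, -, ha⟩ := exists_mem_eq_sup' univ_nonempty
      (fun a => r s a + ∑ s', P s a s' * h s')
    refine le_trans ?_ (add_le_bellmanOp U s a)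
    have hPh := sum_mul_le_of_le (hP0 s a) (hP1 s a) fun s' => (hh s').2
    rw [hTU, ← ha, ← hBellAvg s]
    nlinarith [mul_le_mul_of_nonneg_left hPh hγ'.le]
  have hVU := le_add_of_bellmanOp_le hP0 hP1 hγ0 hγ1 hV hup s
  have hUV := sub_le_of_le_bellmanOp hP0 hP1 hγ0 hγ1 hV hlo s
  obtain ⟨hm, hM⟩ := hh s
  rw [abs_sub_le_iff]
  constructor <;> linarith

lemma gain_nonneg [Nonempty S] (hP0 : ∀ s a s', 0 ≤ P s a s')
    (hP1 : ∀ s a, ∑ s', P s a s' = 1)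
    (hr0 : ∀ s a, 0 ≤ r s a) {ρ : ℝ} {h : S → ℝ}
    (hBellAvg : ∀ s, ρ + h s =
      univ.sup' univ_nonempty (fun a => r s a + ∑ s', P s a s' * h s')) :
    0 ≤ ρ := by
  obtain ⟨s₀, hs₀⟩ := Finite.exists_min h
  obtain ⟨a⟩ := ‹Nonempty A›
  have hle := (hBellAvg s₀).symm ▸
    le_sup' (fun a => r s₀ a + ∑ s', P s₀ a s' * h s') (mem_univ a)
  have hPh := le_sum_mul_of_le (hP0 s₀ a) (hP1 s₀ a) hs₀
  linarith [hr0 s₀ a]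

lemma neg_mul_le_sub_sum_mul_of_bellmanOp (hP0 : ∀ s a s', 0 ≤ P s a s')
    (hP1 : ∀ s a, ∑ s', P s a s' = 1) (hr0 : ∀ s a, 0 ≤ r s a) (hγ1 : γ ≤ 1)
    {V : S → ℝ} (hV : ∀ s, V s = bellmanOp P r γ V s) {K : ℝ} (hVK : ∀ s, V s ≤ K)
    (s : S) (a : A) :
    -((1 - γ) * K) ≤ V s - ∑ s', P s a s' * V s' := by
  have hPV := sum_mul_le_of_le (hP0 s a) (hP1 s a) hVK
  nlinarith [hV s ▸ add_le_bellmanOp V s a, hr0 s a,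
    mul_le_mul_of_nonneg_left hPV (sub_nonneg.2 hγ1)]

end DiscountedBellman

theorem stmt17_general {S A : Type*} [Fintype S] [Fintype A] [DecidableEq S]
    [Nonempty S] [Nonempty A]
    (P : S → A → S → ℝ) (r : S → A → ℝ)
    (hP0 : ∀ s a s', 0 ≤ P s a s') (hP1 : ∀ s a, ∑ s', P s a s' = 1)
    (hr0 : ∀ s a, 0 ≤ r s a)
    (γ : ℝ) (hγ0 : 0 ≤ γ) (hγ1 : γ < 1)
    (ρ : ℝ) (h : S → ℝ)
    (hBellAvg : ∀ s, ρ + h s =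
      univ.sup' univ_nonempty (fun a => r s a + ∑ s', P s a s' * h s'))
    (Vstar : S → ℝ)
    (hVstar : ∀ s, Vstar s =
      univ.sup' univ_nonempty (fun a => r s a + γ * ∑ s', P s a s' * Vstar s'))
    (π : S → A → ℝ) (hπ0 : ∀ s a, 0 ≤ π s a) (hπ1 : ∀ s, ∑ a, π s a = 1)
    (st : S) (ν : ℕ → S → A → ℝ)
    (hν1 : ∀ s a, ν 1 s a = if s = st then π s a else 0)
    (hνrec : ∀ t, 1 ≤ t → ∀ s a,
      ν (t + 1) s a = π s a * ∑ s', ∑ a', ν t s' a' * P s' a' s)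
    (T : ℕ) :
    ∑ s, ∑ a, (∑ t ∈ Icc 1 T, ν t s a) *
        ((∑ s', P s a s' * Vstar s' ^ 2) - (∑ s', P s a s' * Vstar s') ^ 2)
      ≤ 8 * (univ.sup' univ_nonempty h - univ.inf' univ_nonempty h) ^ 2
        + 4 * (univ.sup' univ_nonempty h - univ.inf' univ_nonempty h) * T * ρ
        + 4 * (univ.sup' univ_nonempty h - univ.inf' univ_nonempty h) ^ 2
          * T * (1 - γ) := by
  set sp := univ.sup' univ_nonempty h - univ.inf' univ_nonempty h
  have hh : ∀ s, h s ∈ Set.Icc (univ.inf' univ_nonempty h) (univ.sup' univ_nonempty h) :=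
    fun s => ⟨inf'_le h (mem_univ s), le_sup' h (mem_univ s)⟩
  have hsp : 0 ≤ sp := sub_nonneg.2 ((hh (Classical.arbitrary S)).1.trans (hh _).2)
  have hρ : 0 ≤ ρ := gain_nonneg hP0 hP1 hr0 hBellAvg
  have hγ' : 0 < 1 - γ := by linarith
  set L := ρ / (1 - γ) - sp
  have hV : ∀ s, Vstar s ∈ Set.Icc L (L + 2 * sp) := fun s => by
    have := abs_sub_le_iff.1
      (abs_sub_div_one_sub_le_of_bellman hP0 hP1 hγ0 hγ1 hh hBellAvg hVstar s)
    constructor <;> linarith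
  have hK : (1 - γ) * (L + 2 * sp) = ρ + (1 - γ) * sp := by simp only [L]; field_simp; ring
  have hvar : ∀ s a, (∑ s', P s a s' * Vstar s' ^ 2) - (∑ s', P s a s' * Vstar s') ^ 2 ≤
      ∑ s', P s a s' * variancePotential L (2 * sp) (Vstar s') -
        variancePotential L (2 * sp) (Vstar s) + 2 * (2 * sp) * (ρ + (1 - γ) * sp) :=
    fun s a => variance_le_variancePotential_drift (hP0 s a) (hP1 s a) (by positivity) hV (hV s)
      (hK ▸ neg_mul_le_sub_sum_mul_of_bellmanOp hP0 hP1 hr0 hγ1.le hVstar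
        (fun s => (hV s).2) s a)
  have hν0 : ∀ s a, 0 ≤ ν 1 s a := fun s a => by
    rw [hν1]; split_ifs
    exacts [hπ0 s a, le_rfl]
  have hν1' : ∑ s, ∑ a, ν 1 s a = 1 := by simp [hν1, hπ1]
  have hmain := sum_occupancy_mul_le_of_drift hP0 hP1 hπ0 hπ1 hνrec hν0 hν1' hvar
    (fun s => variancePotential_mem_Icc (hV s)) T
  nlinarith [mul_nonneg (Nat.cast_nonneg (α := ℝ) T) hsp]

/-- Accumulated variance of the optimal discounted value function along any policy's
horizon-`T` occupancy measure:
`Σ_{s,a} d_T^π(s,a|st) 𝕍(P_{s,a}, V*) ≤ 8 sp(h*)² + 4 sp(h*) T ρ* + 4 sp(h*)² T (1-γ)`. -/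
theorem stmt17 {S A : Type*} [Fintype S] [Fintype A] [DecidableEq S]
    [Nonempty S] [Nonempty A]
    (P : S → A → S → ℝ) (r : S → A → ℝ)
    (hP0 : ∀ s a s', 0 ≤ P s a s') (hP1 : ∀ s a, ∑ s', P s a s' = 1)
    (hr0 : ∀ s a, 0 ≤ r s a) (hr1 : ∀ s a, r s a ≤ 1)
    (γ : ℝ) (hγ0 : 0 ≤ γ) (hγ1 : γ < 1)
    (ρ : ℝ) (h : S → ℝ)
    (hBellAvg : ∀ s, ρ + h s =
      univ.sup' univ_nonempty (fun a => r s a + ∑ s', P s a s' * h s'))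
    (Vstar : S → ℝ)
    (hVstar : ∀ s, Vstar s =
      univ.sup' univ_nonempty (fun a => r s a + γ * ∑ s', P s a s' * Vstar s'))
    (π : S → A → ℝ) (hπ0 : ∀ s a, 0 ≤ π s a) (hπ1 : ∀ s, ∑ a, π s a = 1)
    (st : S) (ν : ℕ → S → A → ℝ)
    (hν1 : ∀ s a, ν 1 s a = if s = st then π s a else 0)
    (hνrec : ∀ t, 1 ≤ t → ∀ s a,
      ν (t + 1) s a = π s a * ∑ s', ∑ a', ν t s' a' * P s' a' s)
    (T : ℕ) (hT : 1 ≤ T) :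
    ∑ s, ∑ a, (∑ t ∈ Icc 1 T, ν t s a) *
        ((∑ s', P s a s' * Vstar s' ^ 2) - (∑ s', P s a s' * Vstar s') ^ 2)
      ≤ 8 * (univ.sup' univ_nonempty h - univ.inf' univ_nonempty h) ^ 2
        + 4 * (univ.sup' univ_nonempty h - univ.inf' univ_nonempty h) * T * ρ
        + 4 * (univ.sup' univ_nonempty h - univ.inf' univ_nonempty h) ^ 2
          * T * (1 - γ) :=
  stmt17_general P r hP0 hP1 hr0 γ hγ0 hγ1 ρ h hBellAvg Vstar hVstar π hπ0 hπ1 st ν hν1 hνrec T
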